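/- Let H be a normal subgroup of the group K contained in the hypercentre of K. Then one of the following holds: either (a) Hom(K/H, Z(K) ∩ H) ≠ 0, i.e., there is a non-trivial homomorphism from K/H to Z(K) ∩ H; or (b) Z_i(H) ≤ Z_i(K) for all natural numbers i. -/

import Mathlib

universe u

theorem Subgroup.normal_iSup_of_normal {G : Type u} [Group G] {ι : Sort*}
    (f : ι → Subgroup G) (h : ∀ i, (f i).Normal) : (⨆ i, f i).Normal := by
  constructor
  intro x hx g
  refine Subgroup.iSup_induction (C := fun y => g * y * g⁻¹ ∈ ⨆ i, f i) f hx
    (fun i y hy => le_iSup f i ((h i).conj_mem y hy g)) (by simpa using Subgroup.one_mem _) ?_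
  intro a b ha hb
  have hab : g * (a * b) * g⁻¹ = (g * a * g⁻¹) * (g * b * g⁻¹) := by group
  rw [hab]; exact mul_mem ha hb

/-- The transfinite upper central series of a group, as ordinal-indexed normal subgroups. -/
noncomputable def transUpperCentralSeriesAux (G : Type u) [Group G] :
    Ordinal.{u} → {H : Subgroup G // H.Normal} := fun o =>
  Ordinal.limitRecOn o
    ⟨⊥, inferInstance⟩
    (fun _ Z => ⟨@Subgroup.upperCentralSeriesStep G _ Z.1 Z.2, by
      haveI := Z.2; rw [Subgroup.upperCentralSeriesStep_eq_comap_center]; infer_instance⟩)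
    (fun o _ ih => ⟨⨆ (o' : Ordinal.{u}) (ho' : o' < o), (ih o' ho').1,
      Subgroup.normal_iSup_of_normal _ fun o' =>
        Subgroup.normal_iSup_of_normal _ fun ho' => (ih o' ho').2⟩)

/-- The transfinite upper central series. -/
noncomputable def transUpperCentralSeries (G : Type u) [Group G] (o : Ordinal.{u}) :
    Subgroup G := (transUpperCentralSeriesAux G o).1

/-- The hypercentre of a group: the union of the transfinite upper central series. -/
noncomputable def hypercenter (G : Type u) [Group G] : Subgroup G :=
  ⨆ o : Ordinal.{u}, transUpperCentralSeries G o

/-- A group is hypercentral if it equals the union of its transfinite upper central series. -/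
def IsHypercentral (G : Type u) [Group G] : Prop := hypercenter G = ⊤

/-- The hypercentral length: the least ordinal `o` with `Z_o(G) = G`. -/
noncomputable def hypercentralLength (G : Type u) [Group G] : Ordinal.{u} :=
  sInf {o : Ordinal.{u} | transUpperCentralSeries G o = ⊤}

/-- A group is locally nilpotent if every finitely generated subgroup is nilpotent. -/
def IsLocallyNilpotent (G : Type*) [Group G] : Prop :=
  ∀ S : Subgroup G, S.FG → Group.IsNilpotent S

/-!
If (b) fails, let `j + 1` be the first index with `Z_{j+1}(H) ⊄ Z_{j+1}(K)`. The subgroup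
`Z_{j+1}(H)` is characteristic in `H`, hence normal in `K`, and it lies in the hypercentre; so an
element `y` of it outside `Z_{j+1}(K)` of least hypercentral height has `⁅y, K⁆ ⊆ Z_{j+1}(K)`.
Choose `k₀` with `⁅y, k₀⁆ ∉ Z_j(K)` and an iterated commutator `φ = ⁅⋯⁅·, k₁⁆, ⋯, k_j⁆` with
`φ ⁅y, k₀⁆ ≠ 1`. Then `k ↦ φ ⁅y, k⁆` is a nontrivial homomorphism `K → Z(K) ∩ H`, and it kills `H`
because `⁅y, H⁆ ⊆ Z_j(H) ≤ Z_j(K)`.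
-/

open scoped commutatorElement

theorem Subgroup.Normal.commutatorElement_mem_left {G : Type*} [Group G] {N : Subgroup G}
    [N.Normal] {a : G} (ha : a ∈ N) (b : G) : ⁅a, b⁆ ∈ N :=
  Subgroup.commutator_le_left N ⊤ (Subgroup.commutator_mem_commutator ha (Subgroup.mem_top b))

section Transfinite

variable {G : Type u} [Group G]

instance transUpperCentralSeries_normal (o : Ordinal.{u}) :
    (transUpperCentralSeries G o).Normal :=
  (transUpperCentralSeriesAux G o).2

theorem transUpperCentralSeries_zero : transUpperCentralSeries G 0 = ⊥ := by
  simp [transUpperCentralSeries, transUpperCentralSeriesAux]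

theorem mem_transUpperCentralSeries_succ {o : Ordinal.{u}} {x : G} :
    x ∈ transUpperCentralSeries G (o + 1) ↔ ∀ y, ⁅x, y⁆ ∈ transUpperCentralSeries G o := by
  simp only [transUpperCentralSeries, transUpperCentralSeriesAux, Ordinal.limitRecOn_add_one]
  rfl

theorem transUpperCentralSeries_limit {o : Ordinal.{u}} (ho : Order.IsSuccLimit o) :
    transUpperCentralSeries G o =
      ⨆ (o' : Ordinal.{u}) (_ : o' < o), transUpperCentralSeries G o' := by
  simp only [transUpperCentralSeries, transUpperCentralSeriesAux,
    Ordinal.limitRecOn_limit _ _ _ _ ho]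

theorem transUpperCentralSeries_le_succ (o : Ordinal.{u}) :
    transUpperCentralSeries G o ≤ transUpperCentralSeries G (o + 1) := fun _ hx =>
  mem_transUpperCentralSeries_succ.mpr (Subgroup.Normal.commutatorElement_mem_left hx)

theorem transUpperCentralSeries_mono : Monotone (transUpperCentralSeries (G := G)) := by
  intro o' o h
  induction o using Ordinal.limitRecOn with
  | zero => rw [nonpos_iff_eq_zero.mp h]
  | add_one o ih =>
    rcases h.lt_or_eq with h | rfl
    · exact (ih (Order.lt_add_one_iff.mp h)).trans (transUpperCentralSeries_le_succ o)
    · rfl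
  | limit o ho _ =>
    rcases h.lt_or_eq with h | rfl
    · rw [transUpperCentralSeries_limit ho]
      exact le_iSup₂_of_le o' h le_rfl
    · rfl

theorem exists_lt_mem_transUpperCentralSeries_of_isSuccLimit {o : Ordinal.{u}}
    (ho : Order.IsSuccLimit o) {x : G} (hx : x ∈ transUpperCentralSeries G o) :
    ∃ o' < o, x ∈ transUpperCentralSeries G o' := by
  rw [transUpperCentralSeries_limit ho] at hx
  refine (Subgroup.mem_biSup_of_directedOn (p := (· < o)) ho.bot_lt ?_).mp hx
  exact fun a ha b hb => ⟨max a b, show max a b < o from max_lt ha hb,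
    transUpperCentralSeries_mono (le_max_left a b),
    transUpperCentralSeries_mono (le_max_right a b)⟩

theorem exists_mem_transUpperCentralSeries_of_mem_hypercenter {x : G}
    (hx : x ∈ hypercenter G) : ∃ o : Ordinal.{u}, x ∈ transUpperCentralSeries G o :=
  (Subgroup.mem_iSup_of_directed transUpperCentralSeries_mono.directed_le).mp hx

theorem exists_mem_not_mem_forall_commutatorElement_mem {N L : Subgroup G} [N.Normal]
    (hN : N ≤ hypercenter G) (hNL : ¬N ≤ L) : ∃ y ∈ N, y ∉ L ∧ ∀ k, ⁅y, k⁆ ∈ L := by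
  by_contra! h
  suffices ∀ o, N ⊓ transUpperCentralSeries G o ≤ L by
    refine hNL fun y hy => ?_
    obtain ⟨o, hyo⟩ := exists_mem_transUpperCentralSeries_of_mem_hypercenter (hN hy)
    exact this o ⟨hy, hyo⟩
  intro o
  induction o using Ordinal.limitRecOn with
  | zero => simp [transUpperCentralSeries_zero]
  | add_one o ih =>
    rintro y ⟨hyN, hyo⟩
    by_contra hyL
    obtain ⟨k, hk⟩ := h y hyN hyL
    exact hk (ih ⟨Subgroup.Normal.commutatorElement_mem_left hyN k,
      mem_transUpperCentralSeries_succ.mp hyo k⟩)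
  | limit o ho ih =>
    rintro y ⟨hyN, hyo⟩
    obtain ⟨o', ho', hyo'⟩ := exists_lt_mem_transUpperCentralSeries_of_isSuccLimit ho hyo
    exact ih o' ho' ⟨hyN, hyo'⟩

end Transfinite

section CentralLayerMap

variable {G : Type*} [Group G]

/-- `φ` induces a homomorphism `Z_{n+1}(G)/Z_n(G) → Z(G)` and maps every normal subgroup into
itself: the properties of an iterated commutator `z ↦ ⁅⋯⁅z, k₁⁆, ⋯, kₙ⁆`. -/
structure IsCentralLayerMap (n : ℕ) (φ : G → G) : Prop where
  map_mul : ∀ a ∈ Subgroup.upperCentralSeries G (n + 1),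
    ∀ b ∈ Subgroup.upperCentralSeries G (n + 1), φ (a * b) = φ a * φ b
  map_eq_one : ∀ a ∈ Subgroup.upperCentralSeries G n, φ a = 1
  map_mem_center : ∀ a ∈ Subgroup.upperCentralSeries G (n + 1), φ a ∈ Subgroup.center G
  map_mem : ∀ (N : Subgroup G) [N.Normal], ∀ a ∈ N, φ a ∈ N

theorem isCentralLayerMap_zero_id : IsCentralLayerMap 0 (id : G → G) where
  map_mul _ _ _ _ := rfl
  map_eq_one a ha := Subgroup.mem_bot.mp ha
  map_mem_center a ha := by rwa [zero_add, Subgroup.upperCentralSeries_one] at ha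
  map_mem _ _ _ ha := ha

namespace IsCentralLayerMap

variable {n : ℕ} {φ : G → G}

theorem map_conj (hφ : IsCentralLayerMap n φ) {x : G}
    (hx : x ∈ Subgroup.upperCentralSeries G (n + 1)) (g : G) : φ (g * x * g⁻¹) = φ x := by
  have hgx : ⁅g, x⁆ ∈ Subgroup.upperCentralSeries G n := by
    rw [← commutatorElement_inv]
    exact inv_mem (Subgroup.mem_upperCentralSeries_succ_iff.mp hx g)
  calc φ (g * x * g⁻¹) = φ (⁅g, x⁆ * x) := by rw [commutatorElement_def]; group
    _ = φ x := by
      rw [hφ.map_mul _ (Subgroup.upperCentralSeries_mono G n.le_succ hgx) _ hx,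
        hφ.map_eq_one _ hgx, one_mul]

theorem comp_commutatorElement_left (hφ : IsCentralLayerMap n φ) (k : G) :
    IsCentralLayerMap (n + 1) (fun z => φ ⁅z, k⁆) where
  map_mul a ha b hb := by
    have hak := Subgroup.mem_upperCentralSeries_succ_iff.mp ha k
    have hbk := Subgroup.mem_upperCentralSeries_succ_iff.mp hb k
    calc φ ⁅a * b, k⁆ = φ (a * ⁅b, k⁆ * a⁻¹) * φ ⁅a, k⁆ := by
          rw [commutatorElement_mul_left_eq_conj_mul,
            hφ.map_mul _ (Subgroup.Normal.conj_mem inferInstance _ hbk a) _ hak]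
      _ = φ ⁅b, k⁆ * φ ⁅a, k⁆ := by rw [hφ.map_conj hbk]
      _ = φ ⁅a, k⁆ * φ ⁅b, k⁆ := Subgroup.mem_center_iff.mp (hφ.map_mem_center _ hak) _
  map_eq_one a ha := hφ.map_eq_one _ (Subgroup.mem_upperCentralSeries_succ_iff.mp ha k)
  map_mem_center a ha := hφ.map_mem_center _ (Subgroup.mem_upperCentralSeries_succ_iff.mp ha k)
  map_mem N _ a ha := hφ.map_mem N _ (Subgroup.Normal.commutatorElement_mem_left ha k)

def commutatorHom (hφ : IsCentralLayerMap n φ) {y : G}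
    (hy : y ∈ Subgroup.upperCentralSeries G (n + 2)) : G →* G :=
  MonoidHom.mk' (fun k => φ ⁅y, k⁆) fun a b => by
    have hya := Subgroup.mem_upperCentralSeries_succ_iff.mp hy a
    have hyb := Subgroup.mem_upperCentralSeries_succ_iff.mp hy b
    calc φ ⁅y, a * b⁆ = φ ⁅y, a⁆ * φ (a * ⁅y, b⁆ * a⁻¹) := by
          rw [← hφ.map_mul _ hya _ (Subgroup.Normal.conj_mem inferInstance _ hyb a),
            commutatorElement_mul_right_eq_mul_conj]
          simp only [mul_assoc]
      _ = φ ⁅y, a⁆ * φ ⁅y, b⁆ := by rw [hφ.map_conj hyb]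

theorem commutatorHom_apply (hφ : IsCentralLayerMap n φ) {y : G}
    (hy : y ∈ Subgroup.upperCentralSeries G (n + 2)) (k : G) :
    hφ.commutatorHom hy k = φ ⁅y, k⁆ :=
  rfl

end IsCentralLayerMap

theorem exists_isCentralLayerMap_ne_one :
    ∀ (n : ℕ) {z : G}, z ∉ Subgroup.upperCentralSeries G n →
      ∃ φ, IsCentralLayerMap n φ ∧ φ z ≠ 1
  | 0, _, hz => ⟨id, isCentralLayerMap_zero_id, fun h => hz (Subgroup.mem_bot.mpr h)⟩
  | n + 1, z, hz => by
    obtain ⟨k, hk⟩ := not_forall.mp (mt Subgroup.mem_upperCentralSeries_succ_iff.mpr hz)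
    obtain ⟨φ, hφ, hφz⟩ := exists_isCentralLayerMap_ne_one n hk
    exact ⟨_, hφ.comp_commutatorElement_left k, hφz⟩

end CentralLayerMap

theorem commutatorElement_mem_map_upperCentralSeries {G : Type*} [Group G] {H : Subgroup G}
    {j : ℕ} {y h : G} (hy : y ∈ (Subgroup.upperCentralSeries H (j + 1)).map H.subtype)
    (hh : h ∈ H) : ⁅y, h⁆ ∈ (Subgroup.upperCentralSeries H j).map H.subtype := by
  obtain ⟨y, hy, rfl⟩ := hy
  exact ⟨⁅y, ⟨h, hh⟩⁆, Subgroup.mem_upperCentralSeries_succ_iff.mp hy _, map_commutatorElement ..⟩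

theorem exists_hom_ne_one_of_not_map_upperCentralSeries_le {K : Type u} [Group K]
    {H : Subgroup K} [H.Normal] (hhyp : H ≤ hypercenter K) {j : ℕ}
    (hj : (Subgroup.upperCentralSeries H j).map H.subtype ≤ Subgroup.upperCentralSeries K j)
    (hj1 : ¬(Subgroup.upperCentralSeries H (j + 1)).map H.subtype ≤
      Subgroup.upperCentralSeries K (j + 1)) :
    ∃ f : (K ⧸ H) →* (Subgroup.center K ⊓ H : Subgroup K), f ≠ 1 := by
  obtain ⟨y, hyN, hyL, hyk⟩ :=
    exists_mem_not_mem_forall_commutatorElement_mem ((Subgroup.map_subtype_le _).trans hhyp) hj1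
  have hyH : y ∈ H := Subgroup.map_subtype_le _ hyN
  obtain ⟨k₁, hk₁⟩ := not_forall.mp (mt Subgroup.mem_upperCentralSeries_succ_iff.mpr hyL)
  obtain ⟨φ, hφ, hφk₁⟩ := exists_isCentralLayerMap_ne_one j hk₁
  let ψ := hφ.commutatorHom (Subgroup.mem_upperCentralSeries_succ_iff.mpr hyk)
  have hψ (k : K) : ψ k ∈ Subgroup.center K ⊓ H :=
    ⟨hφ.map_mem_center _ (hyk k),
      hφ.map_mem H _ (Subgroup.Normal.commutatorElement_mem_left hyH k)⟩
  have hker : H ≤ (ψ.codRestrict _ hψ).ker := fun h hh =>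
    Subtype.ext (hφ.map_eq_one _ (hj (commutatorElement_mem_map_upperCentralSeries hyN hh)))
  refine ⟨QuotientGroup.lift H _ hker, fun hf => hφk₁ ?_⟩
  simpa [ψ, IsCentralLayerMap.commutatorHom_apply] using congr(($hf (k₁ : K ⧸ H) : K))

/-- Let `H` be a normal subgroup of the group `K` contained in the hypercentre of `K`.
Then either (a) `Hom(K/H, Z(K) ∩ H) ≠ 0`, or (b) `Z_i(H) ≤ Z_i(K)` for all `i`. -/
theorem hom_ne_one_or_upperCentralSeries_le {K : Type u} [Group K]
    (H : Subgroup K) [H.Normal] (hhyp : H ≤ hypercenter K) :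
    (∃ f : (K ⧸ H) →* (Subgroup.center K ⊓ H : Subgroup K), f ≠ 1) ∨
      (∀ i : ℕ, (upperCentralSeries H i).map H.subtype ≤ upperCentralSeries K i) := by
  refine or_iff_not_imp_left.mpr fun hf i => ?_
  induction i with
  | zero => exact (Subgroup.map_bot H.subtype).trans_le bot_le
  | succ j ih =>
    by_contra hj
    exact hf (exists_hom_ne_one_of_not_map_upperCentralSeries_le hhyp ih hj)
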